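/- There is a two-state pushdown automaton whose process is not the process of any guarded sequential specification over TSP⨟: the automaton with states ↑ (initial) and ↓ (final), transitions ↑→(a,ε/1)↑, ↑→(a,1/11)↑, ↑→(b,1/ε)↑, ↑→(c,ε/ε)↓, ↑→(c,1/1)↓, ↓→(b,1/ε)↓ has a process graph not bisimilar to the process graph of any guarded recursive specification over TSP⨟. -/
import Mathlib


structure LTS (S : Type*) (A : Type*) where
  Tr : S → A → S → Prop
  Acc : S → Prop

/-- A bisimulation between the states of two labelled transition systems. -/
def IsBisimulation2 {S T A : Type*} (L : LTS S A) (L' : LTS T A)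
    (R : S → T → Prop) : Prop :=
  ∀ s t, R s t →
    (∀ a s', L.Tr s a s' → ∃ t', L'.Tr t a t' ∧ R s' t') ∧
    (∀ a t', L'.Tr t a t' → ∃ s', L.Tr s a s' ∧ R s' t') ∧
    (L.Acc s ↔ L'.Acc t)

def Bisimilar2 {S T A : Type*} (L : LTS S A) (L' : LTS T A) (s : S) (t : T) : Prop :=
  ∃ R, IsBisimulation2 L L' R ∧ R s t
/-- A pushdown automaton (labels `A` are understood to include τ; `none` in the
data component stands for an ε (empty-stack) transition). -/
structure PDA (S A D : Type*) where
  Tr : Set (S × A × Option D × List D × S)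
  init : S
  final : Set S

/-- Transitions of the process graph of a PDA. -/
def PDA.step {S A D : Type*} (M : PDA S A D) : S × List D → A → S × List D → Prop :=
  fun st a st' =>
    match st with
    | (s, []) => (s, a, none, st'.2, st'.1) ∈ M.Tr
    | (s, d :: x) => ∃ y, st'.2 = y ++ x ∧ (s, a, some d, y, st'.1) ∈ M.Tr

/-- The process graph of a PDA: acceptance by final state. -/
def PDA.lts {S A D : Type*} (M : PDA S A D) : LTS (S × List D) A :=
  ⟨M.step, fun st => st.1 ∈ M.final⟩
/-- TSP process expressions: 0, 1, action prefix, choice, sequential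
composition, and identifiers from `V`. -/
inductive Expr (A V : Type) where
  | zero | one
  | act (a : A) (p : Expr A V)
  | add (p q : Expr A V)
  | seq (p q : Expr A V)
  | var (X : V)

/-- The acceptance predicate ↓ for TSP, relative to a specification Δ. -/
inductive EAcc {A V : Type} (Δ : V → Expr A V) : Expr A V → Prop
  | one : EAcc Δ .one
  | addL {p q} : EAcc Δ p → EAcc Δ (Expr.add p q)
  | addR {p q} : EAcc Δ q → EAcc Δ (Expr.add p q)
  | seq {p q} : EAcc Δ p → EAcc Δ q → EAcc Δ (Expr.seq p q)
  | var {X} : EAcc Δ (Δ X) → EAcc Δ (.var X)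


/-- Characterization of the TSP⨟ transition relation (sequencing ⨟ instead of
sequential composition): `T` agrees with the operational rules, where the rule
for the second argument of ⨟ has the negative premise that the first argument
has no outgoing transitions. -/
def IsSeqStep {A V : Type} (Δ : V → Expr A V)
    (T : Expr A V → A → Expr A V → Prop) : Prop :=
  ∀ p a q, T p a q ↔
    match p with
    | .zero => False
    | .one => False
    | .act b r => a = b ∧ q = r
    | .add r s => T r a q ∨ T s a q
    | .seq r s => (∃ r', T r a r' ∧ q = Expr.seq r' s) ∨
        (EAcc Δ r ∧ (∀ b r', ¬ T r b r') ∧ T s a q)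
    | .var X => T (Δ X) a q
/-- An expression is guarded if every occurrence of an identifier lies within
the scope of an action prefix. -/
inductive EGuarded {A V : Type} : Expr A V → Prop
  | zero : EGuarded .zero
  | one : EGuarded .one
  | act (a : A) (p : Expr A V) : EGuarded (.act a p)
  | add {p q} : EGuarded p → EGuarded q → EGuarded (Expr.add p q)
  | seq {p q} : EGuarded p → EGuarded q → EGuarded (Expr.seq p q)
inductive Lab3 where
  | a | b | c

inductive St where
  | up | down

/-- The two-state pushdown automaton of Theorem 5.2: ↑→(a,ε/1)↑, ↑→(a,1/11)↑,
↑→(b,1/ε)↑, ↑→(c,ε/ε)↓, ↑→(c,1/1)↓, ↓→(b,1/ε)↓; initial state ↑, final state ↓;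
the data alphabet {1} is represented by `Unit`. -/
def M14 : PDA St Lab3 Unit where
  Tr := {(St.up, Lab3.a, none, [()], St.up),
         (St.up, Lab3.a, some (), [(), ()], St.up),
         (St.up, Lab3.b, some (), [], St.up),
         (St.up, Lab3.c, none, [], St.down),
         (St.up, Lab3.c, some (), [()], St.down),
         (St.down, Lab3.b, some (), [], St.down)}
  init := St.up
  final := {St.down}

namespace TwoStatePDAProof

variable {A V : Type}

def flat : Expr A V → List (Expr A V)
  | .seq p q => flat p ++ flat q
  | .zero => [.zero]
  | .one => [.one]
  | .act a p => [.act a p]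
  | .add p q => [.add p q]
  | .var X => [.var X]

def subL : Expr A V → List (Expr A V)
  | .zero => [.zero]
  | .one => [.one]
  | .act a p => .act a p :: subL p
  | .add p q => .add p q :: (subL p ++ subL q)
  | .seq p q => .seq p q :: (subL p ++ subL q)
  | .var X => [.var X]

theorem self_mem_flat : ∀ e : Expr A V, e ∈ flat e ∨ ∃ p q, e = Expr.seq p q := by
  intro e; cases e <;> simp [flat]

theorem self_mem_flat' : ∀ (e : Expr A V), (∀ p q, e ≠ Expr.seq p q) → e ∈ flat e := by
  intro e h; cases e <;> first | exact absurd rfl (h _ _) | simp [flat]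

variable (Δ : V → Expr A V) (T : Expr A V → A → Expr A V → Prop)

def Dead (p : Expr A V) : Prop := ∀ b r', ¬ T p b r'

def DA (p : Expr A V) : Prop := Dead T p ∧ EAcc Δ p

def LTr : List (Expr A V) → A → List (Expr A V) → Prop
  | [], _, _ => False
  | p :: l, a, l' => (∃ p', T p a p' ∧ l' = flat p' ++ l) ∨
      (Dead T p ∧ EAcc Δ p ∧ LTr l a l')

variable {Δ T}

theorem eacc_seq {p q} : EAcc Δ (.seq p q) ↔ EAcc Δ p ∧ EAcc Δ q :=
  ⟨fun h => by cases h with | seq h1 h2 => exact ⟨h1, h2⟩, fun ⟨h1, h2⟩ => .seq h1 h2⟩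

theorem flat_acc : ∀ e : Expr A V, EAcc Δ e ↔ ∀ p ∈ flat e, EAcc Δ p := by
  intro e
  induction e with
  | seq p q ihp ihq =>
    simp only [flat, List.mem_append, eacc_seq, ihp, ihq]
    constructor
    · rintro ⟨h1, h2⟩ r (h | h); exacts [h1 _ h, h2 _ h]
    · intro h; exact ⟨fun r hr => h r (Or.inl hr), fun r hr => h r (Or.inr hr)⟩
  | _ => simp [flat]

section T
variable (hT : IsSeqStep Δ T)
include hT

theorem t_zero {a q} : ¬ T .zero a q := fun h => (hT _ a q).mp h

theorem t_one {a q} : ¬ T .one a q := fun h => (hT _ a q).mp h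

theorem t_act {b r a q} : T (.act b r) a q ↔ a = b ∧ q = r := hT _ a q

theorem t_add {p₁ p₂ a q} : T (.add p₁ p₂) a q ↔ T p₁ a q ∨ T p₂ a q := hT _ a q

theorem t_seq {p₁ p₂ a q} : T (.seq p₁ p₂) a q ↔
    (∃ r', T p₁ a r' ∧ q = Expr.seq r' p₂) ∨ (EAcc Δ p₁ ∧ Dead T p₁ ∧ T p₂ a q) := hT _ a q

theorem t_var {X a q} : T (.var X) a q ↔ T (Δ X) a q := hT _ a q

theorem dead_acc_flat : ∀ p : Expr A V, EAcc Δ p → Dead T p → ∀ q ∈ flat p, DA Δ T q := by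
  intro p
  induction p with
  | seq p₁ p₂ ih1 ih2 =>
    intro hacc hdead q hq
    obtain ⟨h1, h2⟩ := eacc_seq.mp hacc
    have d1 : Dead T p₁ := fun b r' h => hdead b (.seq r' p₂) ((t_seq hT).mpr (Or.inl ⟨r', h, rfl⟩))
    have d2 : Dead T p₂ := fun b r' h => hdead b r' ((t_seq hT).mpr (Or.inr ⟨h1, d1, h⟩))
    simp only [flat, List.mem_append] at hq
    rcases hq with hq | hq
    exacts [ih1 h1 d1 q hq, ih2 h2 d2 q hq]
  | _ => intro hacc hdead q hq; simp only [flat, List.mem_singleton] at hq; subst hq;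
         exact ⟨hdead, hacc⟩

theorem dal_flat_dead : ∀ p : Expr A V, (∀ q ∈ flat p, DA Δ T q) → EAcc Δ p ∧ Dead T p := by
  intro p
  induction p with
  | seq p₁ p₂ ih1 ih2 =>
    intro h
    simp only [flat, List.mem_append] at h
    obtain ⟨a1, d1⟩ := ih1 fun q hq => h q (Or.inl hq)
    obtain ⟨a2, d2⟩ := ih2 fun q hq => h q (Or.inr hq)
    refine ⟨.seq a1 a2, fun b r' hb => ?_⟩
    rcases (t_seq hT).mp hb with ⟨r', hr, _⟩ | ⟨_, _, hr⟩
    exacts [d1 _ _ hr, d2 _ _ hr]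
  | _ =>
    intro h
    have hm := h _ (self_mem_flat' _ (by intro p q h; cases h))
    exact ⟨hm.2, hm.1⟩

end T



theorem ltr_append_right : ∀ {l l' : List (Expr A V)} (m) {a},
    LTr Δ T l a l' → LTr Δ T (l ++ m) a (l' ++ m) := by
  intro l
  induction l with
  | nil => intro l' m a h; exact h.elim
  | cons p t ih =>
    intro l' m a h
    rcases h with ⟨p', hp, rfl⟩ | ⟨hd, ha, h⟩
    · exact Or.inl ⟨p', hp, by simp⟩
    · exact Or.inr ⟨hd, ha, ih m h⟩

theorem ltr_prefix_da : ∀ {m : List (Expr A V)}, (∀ p ∈ m, DA Δ T p) →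
    ∀ {l a l'}, (LTr Δ T (m ++ l) a l' ↔ LTr Δ T l a l') := by
  intro m
  induction m with
  | nil => intro _ l a l'; simp
  | cons p t ih =>
    intro h l a l'
    have hp := h p (by simp)
    constructor
    · rintro (⟨p', hp', _⟩ | ⟨_, _, h2⟩)
      · exact absurd hp' (hp.1 _ _)
      · exact (ih (fun q hq => h q (by simp [hq]))).mp h2
    · intro h2
      exact Or.inr ⟨hp.1, hp.2, (ih (fun q hq => h q (by simp [hq]))).mpr h2⟩

theorem ltr_split : ∀ {m l : List (Expr A V)} {a l'}, LTr Δ T (m ++ l) a l' →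
    (∃ m', LTr Δ T m a m' ∧ l' = m' ++ l) ∨ ((∀ p ∈ m, DA Δ T p) ∧ LTr Δ T l a l') := by
  intro m
  induction m with
  | nil => intro l a l' h; exact Or.inr ⟨by simp, h⟩
  | cons p t ih =>
    intro l a l' h
    rcases h with ⟨p', hp, rfl⟩ | ⟨hd, ha, h2⟩
    · exact Or.inl ⟨flat p' ++ t, Or.inl ⟨p', hp, rfl⟩, by simp⟩
    · rcases ih h2 with ⟨m', hm, rfl⟩ | ⟨hda, h3⟩
      · exact Or.inl ⟨m', Or.inr ⟨hd, ha, hm⟩, rfl⟩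
      · refine Or.inr ⟨?_, h3⟩
        intro q hq
        rcases List.mem_cons.mp hq with rfl | hq
        exacts [⟨hd, ha⟩, hda q hq]

theorem dal_no_ltr : ∀ {l : List (Expr A V)}, (∀ p ∈ l, DA Δ T p) → ∀ {a l'}, ¬ LTr Δ T l a l' := by
  intro l
  induction l with
  | nil => intro _ a l' h; exact h.elim
  | cons p t ih =>
    rintro h a l' (⟨p', hp, _⟩ | ⟨_, _, h2⟩)
    · exact (h p (by simp)).1 _ _ hp
    · exact ih (fun q hq => h q (by simp [hq])) h2

theorem all_dead_of_no_ltr : ∀ {l : List (Expr A V)}, (∀ p ∈ l, EAcc Δ p) →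
    (∀ a l', ¬ LTr Δ T l a l') → ∀ p ∈ l, DA Δ T p := by
  intro l
  induction l with
  | nil => simp
  | cons p t ih =>
    intro hacc hno q hq
    have hd : Dead T p := fun b r' h => hno b (flat r' ++ t) (Or.inl ⟨r', h, rfl⟩)
    have hpa : EAcc Δ p := hacc p (by simp)
    rcases List.mem_cons.mp hq with rfl | hq
    · exact ⟨hd, hpa⟩
    · exact ih (fun r hr => hacc r (by simp [hr]))
        (fun a l' h => hno a l' (Or.inr ⟨hd, hpa, h⟩)) q hq

section T2
variable (hT : IsSeqStep Δ T)
include hT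

theorem step_flat : ∀ (e : Expr A V) {a e'}, T e a e' → LTr Δ T (flat e) a (flat e') := by
  intro e
  induction e with
  | seq p q ihp ihq =>
    intro a e' h
    rcases (t_seq hT).mp h with ⟨r', hr, rfl⟩ | ⟨hacc, hdead, hq⟩
    · exact ltr_append_right (flat q) (ihp hr)
    · exact (ltr_prefix_da (dead_acc_flat hT p hacc hdead)).mpr (ihq hq)
  | _ => intro a e' h; exact Or.inl ⟨e', h, by simp⟩

theorem flat_step : ∀ (e : Expr A V) {a l'}, LTr Δ T (flat e) a l' →
    ∃ e', T e a e' ∧ l' = flat e' := by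
  intro e
  induction e with
  | seq p q ihp ihq =>
    intro a l' h
    rcases ltr_split h with ⟨m', hm, rfl⟩ | ⟨hdal, hq⟩
    · obtain ⟨p', hp, rfl⟩ := ihp hm
      exact ⟨.seq p' q, (t_seq hT).mpr (Or.inl ⟨p', hp, rfl⟩), rfl⟩
    · obtain ⟨hacc, hdead⟩ := dal_flat_dead hT p hdal
      obtain ⟨e', he, rfl⟩ := ihq hq
      exact ⟨e', (t_seq hT).mpr (Or.inr ⟨hacc, hdead, he⟩), rfl⟩
  | _ =>
    intro a l' h
    rcases h with ⟨p', hp, rfl⟩ | ⟨_, _, h2⟩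
    · exact ⟨p', hp, by simp⟩
    · exact h2.elim

end T2

theorem mem_subL_self : ∀ e : Expr A V, e ∈ subL e := by
  intro e; cases e <;> simp [subL]

theorem subL_trans : ∀ q p : Expr A V, p ∈ subL q → subL p ⊆ subL q := by
  intro q
  induction q with
  | act a r ih =>
    intro p hp
    rcases List.mem_cons.mp hp with rfl | hp
    · exact fun x hx => hx
    · exact fun x hx => List.mem_cons_of_mem _ (ih p hp hx)
  | add r s ihr ihs =>
    intro p hp
    rcases List.mem_cons.mp hp with rfl | hp
    · exact fun x hx => hx
    · rcases List.mem_append.mp hp with hp | hp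
      · exact fun x hx => List.mem_cons_of_mem _ (List.mem_append.mpr (Or.inl (ihr p hp hx)))
      · exact fun x hx => List.mem_cons_of_mem _ (List.mem_append.mpr (Or.inr (ihs p hp hx)))
  | seq r s ihr ihs =>
    intro p hp
    rcases List.mem_cons.mp hp with rfl | hp
    · exact fun x hx => hx
    · rcases List.mem_append.mp hp with hp | hp
      · exact fun x hx => List.mem_cons_of_mem _ (List.mem_append.mpr (Or.inl (ihr p hp hx)))
      · exact fun x hx => List.mem_cons_of_mem _ (List.mem_append.mpr (Or.inr (ihs p hp hx)))
  | _ =>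
    intro p hp
    simp only [subL, List.mem_singleton] at hp
    subst hp; exact fun x hx => hx

theorem flat_sub : ∀ e : Expr A V, ∀ q ∈ flat e, q ∈ subL e := by
  intro e
  induction e with
  | seq p q ihp ihq =>
    intro r hr
    simp only [flat, List.mem_append] at hr
    rcases hr with hr | hr
    · exact List.mem_cons_of_mem _ (List.mem_append.mpr (Or.inl (ihp r hr)))
    · exact List.mem_cons_of_mem _ (List.mem_append.mpr (Or.inr (ihq r hr)))
  | _ =>
    intro r hr
    simp only [flat, List.mem_singleton] at hr
    subst hr; exact mem_subL_self _

section G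
variable (hT : IsSeqStep Δ T)
include hT

theorem guarded_step_sub : ∀ {e : Expr A V}, EGuarded e → ∀ {a e'}, T e a e' →
    ∀ q ∈ flat e', q ∈ subL e := by
  intro e hg
  induction hg with
  | zero => intro a e' h; exact absurd h (t_zero hT)
  | one => intro a e' h; exact absurd h (t_one hT)
  | act b p =>
    intro a e' h
    obtain ⟨rfl, rfl⟩ := (t_act hT).mp h
    exact fun q hq => List.mem_cons_of_mem _ (flat_sub _ q hq)
  | add hp hq ihp ihq =>
    intro a e' h q hq
    rcases (t_add hT).mp h with h | h
    · exact List.mem_cons_of_mem _ (List.mem_append.mpr (Or.inl (ihp h q hq)))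
    · exact List.mem_cons_of_mem _ (List.mem_append.mpr (Or.inr (ihq h q hq)))
  | seq hp hq ihp ihq =>
    intro a e' h q hq
    rcases (t_seq hT).mp h with ⟨r', hr, rfl⟩ | ⟨_, _, h2⟩
    · simp only [flat, List.mem_append] at hq
      rcases hq with hq | hq
      · exact List.mem_cons_of_mem _ (List.mem_append.mpr (Or.inl (ihp hr q hq)))
      · exact List.mem_cons_of_mem _ (List.mem_append.mpr (Or.inr (flat_sub _ q hq)))
    · exact List.mem_cons_of_mem _ (List.mem_append.mpr (Or.inr (ihq h2 q hq)))

theorem step_sub_var (hg : ∀ X, EGuarded (Δ X)) :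
    ∀ (p : Expr A V) {a e'}, T p a e' → ∀ q ∈ flat e',
      q ∈ subL p ∨ ∃ X, q ∈ subL (Δ X) := by
  intro p
  induction p with
  | zero => intro a e' h; exact absurd h (t_zero hT)
  | one => intro a e' h; exact absurd h (t_one hT)
  | act b r =>
    intro a e' h q hq
    obtain ⟨rfl, rfl⟩ := (t_act hT).mp h
    exact Or.inl (List.mem_cons_of_mem _ (flat_sub _ q hq))
  | add r s ihr ihs =>
    intro a e' h q hq
    rcases (t_add hT).mp h with h | h
    · rcases ihr h q hq with h2 | h2
      · exact Or.inl (List.mem_cons_of_mem _ (List.mem_append.mpr (Or.inl h2)))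
      · exact Or.inr h2
    · rcases ihs h q hq with h2 | h2
      · exact Or.inl (List.mem_cons_of_mem _ (List.mem_append.mpr (Or.inr h2)))
      · exact Or.inr h2
  | seq r s ihr ihs =>
    intro a e' h q hq
    rcases (t_seq hT).mp h with ⟨r', hr, rfl⟩ | ⟨_, _, h2⟩
    · simp only [flat, List.mem_append] at hq
      rcases hq with hq | hq
      · rcases ihr hr q hq with h2 | h2
        · exact Or.inl (List.mem_cons_of_mem _ (List.mem_append.mpr (Or.inl h2)))
        · exact Or.inr h2
      · exact Or.inl (List.mem_cons_of_mem _ (List.mem_append.mpr (Or.inr (flat_sub _ q hq))))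
    · rcases ihs h2 q hq with h2 | h2
      · exact Or.inl (List.mem_cons_of_mem _ (List.mem_append.mpr (Or.inr h2)))
      · exact Or.inr h2
  | var Y =>
    intro a e' h q hq
    exact Or.inr ⟨Y, guarded_step_sub hT (hg Y) ((t_var hT).mp h) q hq⟩

end G

def SubSet (Δ : V → Expr A V) : Set (Expr A V) :=
  (⋃ X : V, {p | p ∈ subL (Δ X)}) ∪ Set.range Expr.var

theorem subSet_finite [Finite V] : (SubSet Δ).Finite :=
  Set.Finite.union (Set.finite_iUnion fun X => (subL (Δ X)).finite_toSet)
    (Set.finite_range _)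

theorem var_mem_subSet (X : V) : Expr.var X ∈ SubSet Δ := Or.inr ⟨X, rfl⟩

theorem step_subSet (hT : IsSeqStep Δ T) (hg : ∀ X, EGuarded (Δ X)) {p : Expr A V}
    (hp : p ∈ SubSet Δ) {a e'} (h : T p a e') : ∀ q ∈ flat e', q ∈ SubSet Δ := by
  intro q hq
  rcases step_sub_var hT hg p h q hq with h2 | ⟨X, h2⟩
  · rcases hp with hp | ⟨Y, rfl⟩
    · simp only [Set.mem_iUnion, Set.mem_setOf_eq] at hp
      obtain ⟨X, hX⟩ := hp
      exact Or.inl (Set.mem_iUnion.mpr ⟨X, subL_trans _ _ hX h2⟩)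
    · simp only [subL, List.mem_singleton] at h2
      subst h2; exact var_mem_subSet Y
  · exact Or.inl (Set.mem_iUnion.mpr ⟨X, h2⟩)

theorem ltr_subSet (hT : IsSeqStep Δ T) (hg : ∀ X, EGuarded (Δ X)) :
    ∀ {l : List (Expr A V)} {a l'}, (∀ p ∈ l, p ∈ SubSet Δ) → LTr Δ T l a l' →
      ∀ p ∈ l', p ∈ SubSet Δ := by
  intro l
  induction l with
  | nil => intro a l' _ h; exact h.elim
  | cons p t ih =>
    intro a l' hgood h
    rcases h with ⟨p', hp, rfl⟩ | ⟨_, _, h2⟩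
    · intro q hq
      rcases List.mem_append.mp hq with hq | hq
      · exact step_subSet hT hg (hgood p (by simp)) hp q hq
      · exact hgood q (by simp [hq])
    · exact ih (fun q hq => hgood q (by simp [hq])) h2

def rep (n : ℕ) : List Unit := List.replicate n ()

theorem m14_up_a (n) : M14.step (St.up, rep n) Lab3.a (St.up, rep (n+1)) := by
  cases n with
  | zero => simp [M14, PDA.step, rep]
  | succ k =>
    refine ⟨[(), ()], ?_, by simp [M14]⟩
    simp [rep, List.replicate_succ]

theorem m14_up_b (n) : M14.step (St.up, rep (n+1)) Lab3.b (St.up, rep n) := by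
  refine ⟨[], ?_, by simp [M14]⟩
  simp [rep, List.replicate_succ]

theorem m14_up_c (n) : M14.step (St.up, rep n) Lab3.c (St.down, rep n) := by
  cases n with
  | zero => simp [M14, PDA.step, rep]
  | succ k =>
    refine ⟨[()], ?_, by simp [M14]⟩
    simp [rep, List.replicate_succ]

theorem m14_down_b (n) : M14.step (St.down, rep (n+1)) Lab3.b (St.down, rep n) := by
  refine ⟨[], ?_, by simp [M14]⟩
  simp [rep, List.replicate_succ]

theorem m14_up_c_inv {n s'} : M14.step (St.up, rep n) Lab3.c s' → s' = (St.down, rep n) := by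
  obtain ⟨s1, s2⟩ := s'
  cases n with
  | zero =>
    intro h
    simp only [rep, List.replicate, M14, PDA.step, Set.mem_insert_iff, Set.mem_singleton_iff,
      Prod.mk.injEq] at h
    rcases h with h | h | h | h | h | h <;> simp_all [rep]
  | succ k =>
    rintro ⟨y, hy, h⟩
    simp only [M14, Set.mem_insert_iff, Set.mem_singleton_iff, Prod.mk.injEq] at h
    rcases h with h | h | h | h | h | h <;> simp_all [rep, List.replicate_succ]

theorem m14_down_b_inv {n x s'} : M14.step (St.down, rep (n+1)) x s' → s' = (St.down, rep n) := by
  obtain ⟨s1, s2⟩ := s'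
  rw [show rep (n+1) = () :: rep n from by simp [rep, List.replicate_succ]]
  rintro ⟨y, hy, h⟩
  simp only [M14, Set.mem_insert_iff, Set.mem_singleton_iff, Prod.mk.injEq] at h
  rcases h with h | h | h | h | h | h <;> simp_all

theorem m14_down_nil {x s'} : ¬ M14.step (St.down, rep 0) x s' := by
  intro h
  simp only [rep, List.replicate, M14, PDA.step, Set.mem_insert_iff, Set.mem_singleton_iff,
    Prod.mk.injEq] at h
  rcases h with h | h | h | h | h | h <;> simp_all

theorem m14_acc_up {l} : ¬ M14.lts.Acc (St.up, l) := by
  intro h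
  simp only [M14, PDA.lts, Set.mem_singleton_iff] at h
  exact St.noConfusion h

theorem m14_acc_down {l} : M14.lts.Acc (St.down, l) := by
  simp [M14, PDA.lts]

section Main

variable {V : Type} {Δ : V → Expr Lab3 V} {T : Expr Lab3 V → Lab3 → Expr Lab3 V → Prop}
  {R : Expr Lab3 V → St × List Unit → Prop}

def BL (R : Expr Lab3 V → St × List Unit → Prop) (l : List (Expr Lab3 V))
    (s : St × List Unit) : Prop :=
  ∃ e, flat e = l ∧ R e s

def Phi (Δ : V → Expr Lab3 V) (T : Expr Lab3 V → Lab3 → Expr Lab3 V → Prop)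
    (R : Expr Lab3 V → St × List Unit → Prop) (α : Expr Lab3 V) (n : ℕ) : Prop :=
  ∃ l₁ l₂, (∀ p ∈ l₁, DA Δ T p) ∧ (∀ p ∈ l₂, DA Δ T p) ∧
    BL R (l₁ ++ α :: l₂) (St.up, rep n)

theorem decomp : ∀ {l : List (Expr Lab3 V)} {x l'}, LTr Δ T l x l' →
    ∃ δ α τ, l = δ ++ α :: τ ∧ (∀ p ∈ δ, DA Δ T p) ∧ ¬ Dead T α := by
  intro l
  induction l with
  | nil => intro x l' h; exact h.elim
  | cons p t ih =>
    intro x l' h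
    rcases h with ⟨p', hp, _⟩ | ⟨hd, ha, h2⟩
    · exact ⟨[], p, t, rfl, by simp, fun hdead => hdead _ _ hp⟩
    · obtain ⟨δ, α, τ, rfl, hδ, hα⟩ := ih h2
      refine ⟨p :: δ, α, τ, rfl, ?_, hα⟩
      intro q hq
      rcases List.mem_cons.mp hq with rfl | hq
      exacts [⟨hd, ha⟩, hδ q hq]

section WithBisim

variable (hT : IsSeqStep Δ T) (hR : IsBisimulation2 ⟨T, EAcc Δ⟩ M14.lts R)
include hT hR

theorem BL_fwd {l s a l'} (hB : BL R l s) (h : LTr Δ T l a l') :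
    ∃ s', M14.step s a s' ∧ BL R l' s' := by
  obtain ⟨e, rfl, hRe⟩ := hB
  obtain ⟨e', hTe, rfl⟩ := flat_step hT e h
  obtain ⟨s', hs, hR'⟩ := (hR e s hRe).1 a e' hTe
  exact ⟨s', hs, e', rfl, hR'⟩

theorem BL_bwd {l s a s'} (hB : BL R l s) (h : M14.step s a s') :
    ∃ l', LTr Δ T l a l' ∧ BL R l' s' := by
  obtain ⟨e, rfl, hRe⟩ := hB
  obtain ⟨e', hTe, hR'⟩ := (hR e s hRe).2.1 a s' h
  exact ⟨flat e', step_flat hT e hTe, e', rfl, hR'⟩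

omit hT in
theorem BL_acc {l s} (hB : BL R l s) : (∀ p ∈ l, EAcc Δ p) ↔ M14.lts.Acc s := by
  obtain ⟨e, rfl, hRe⟩ := hB
  exact (flat_acc e).symm.trans (hR e s hRe).2.2

theorem run : ∀ (k : ℕ) (τ ρ : List (Expr Lab3 V)), (∀ p ∈ τ, EAcc Δ p) →
    BL R (ρ ++ τ) (St.up, rep k) → ∃ ρ', BL R (ρ' ++ τ) (St.up, rep 0) := by
  intro k
  induction k with
  | zero => exact fun τ ρ _ h => ⟨ρ, h⟩
  | succ k ih =>
    intro τ ρ hτ hB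
    obtain ⟨l', hl, hB'⟩ := BL_bwd hT hR hB (m14_up_b k)
    rcases ltr_split hl with ⟨ρ', hρ, rfl⟩ | ⟨hdal, _⟩
    · exact ih τ ρ' hτ hB'
    · exfalso
      apply m14_acc_up ((BL_acc hR hB).mp ?_)
      intro p hp
      rcases List.mem_append.mp hp with hp | hp
      exacts [(hdal p hp).2, hτ p hp]

theorem main_lemma (hg : ∀ X, EGuarded (Δ X)) : ∀ {n : ℕ} {l : List (Expr Lab3 V)},
    BL R l (St.up, rep n) → (∀ p ∈ l, p ∈ SubSet Δ) →
    ∃ α, α ∈ SubSet Δ ∧ Phi Δ T R α n := by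
  intro n l hB hgood
  obtain ⟨l0, hl0, _⟩ := BL_bwd hT hR hB (m14_up_a n)
  obtain ⟨δ, α, τ, rfl, hδ, hα⟩ := decomp hl0
  obtain ⟨lc, hlc, hBc⟩ := BL_bwd hT hR hB (m14_up_c n)
  have hlc2 : LTr Δ T (α :: τ) Lab3.c lc := (ltr_prefix_da hδ).mp hlc
  have hτacc : ∀ p ∈ τ, EAcc Δ p := by
    rcases hlc2 with ⟨α', hα', rfl⟩ | ⟨hd, _, _⟩
    · have hacc := (BL_acc hR hBc).mpr m14_acc_down
      exact fun p hp => hacc p (List.mem_append.mpr (Or.inr hp))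
    · exact absurd hd hα
  have hB0 : BL R ((δ ++ [α]) ++ τ) (St.up, rep n) := by
    rw [List.append_assoc]; exact hB
  obtain ⟨ρ', hBρ⟩ := run hT hR n τ (δ ++ [α]) hτacc hB0
  obtain ⟨lf, hlf, hBf⟩ := BL_bwd hT hR hBρ (m14_up_c 0)
  rcases ltr_split hlf with ⟨ρf, hρf, rfl⟩ | ⟨hdal, _⟩
  · have haccf : ∀ p ∈ ρf ++ τ, EAcc Δ p := (BL_acc hR hBf).mpr m14_acc_down
    have hno : ∀ x l'', ¬ LTr Δ T (ρf ++ τ) x l'' := by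
      intro x l'' h
      obtain ⟨s', hs, _⟩ := BL_fwd hT hR hBf h
      exact m14_down_nil hs
    have hdalf := all_dead_of_no_ltr haccf hno
    refine ⟨α, hgood α (by simp), δ, τ, hδ, ?_, hB⟩
    exact fun p hp => hdalf p (List.mem_append.mpr (Or.inr hp))
  · exfalso
    apply m14_acc_up ((BL_acc hR hBρ).mp ?_)
    intro p hp
    rcases List.mem_append.mp hp with hp | hp
    exacts [(hdal p hp).2, hτacc p hp]

theorem reach (hg : ∀ X, EGuarded (Δ X)) {X₀ : V} (hR0 : R (.var X₀) (St.up, [])) :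
    ∀ n, ∃ l, BL R l (St.up, rep n) ∧ ∀ p ∈ l, p ∈ SubSet Δ := by
  intro n
  induction n with
  | zero =>
    refine ⟨[.var X₀], ⟨.var X₀, rfl, hR0⟩, ?_⟩
    intro p hp
    rcases List.mem_singleton.mp hp with rfl
    exact var_mem_subSet X₀
  | succ n ih =>
    obtain ⟨l, hB, hgood⟩ := ih
    obtain ⟨l', hl, hB'⟩ := BL_bwd hT hR hB (m14_up_a n)
    exact ⟨l', hB', ltr_subSet hT hg hgood hl⟩

end WithBisim

def CRel (Δ : V → Expr Lab3 V) (T : Expr Lab3 V → Lab3 → Expr Lab3 V → Prop)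
    (R : Expr Lab3 V → St × List Unit → Prop) (s t : St × List Unit) : Prop :=
  ∃ m l₁ l₂ l₁' l₂', (∀ p ∈ l₁, DA Δ T p) ∧ (∀ p ∈ l₂, DA Δ T p) ∧
    (∀ p ∈ l₁', DA Δ T p) ∧ (∀ p ∈ l₂', DA Δ T p) ∧
    BL R (l₁ ++ (m ++ l₂)) s ∧ BL R (l₁' ++ (m ++ l₂')) t

section CRelFacts

variable (hT : IsSeqStep Δ T) (hR : IsBisimulation2 ⟨T, EAcc Δ⟩ M14.lts R)
include hT hR

theorem crel_fwd {s t x s'} (hC : CRel Δ T R s t) (h : M14.step s x s') :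
    ∃ t', M14.step t x t' ∧ CRel Δ T R s' t' := by
  obtain ⟨m, l₁, l₂, l₁', l₂', h1, h2, h3, h4, hBs, hBt⟩ := hC
  obtain ⟨l', hl, hBs'⟩ := BL_bwd hT hR hBs h
  have hl2 : LTr Δ T (m ++ l₂) x l' := (ltr_prefix_da h1).mp hl
  rcases ltr_split hl2 with ⟨m', hm, rfl⟩ | ⟨_, hcontra⟩
  · have hrt : LTr Δ T (l₁' ++ (m ++ l₂')) x (m' ++ l₂') :=
      (ltr_prefix_da h3).mpr (ltr_append_right l₂' hm)
    obtain ⟨t', ht, hBt'⟩ := BL_fwd hT hR hBt hrt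
    exact ⟨t', ht, m', [], l₂, [], l₂', by simp, h2, by simp, h4, hBs', hBt'⟩
  · exact absurd hcontra (dal_no_ltr h2)

theorem crel_bwd {s t x t'} (hC : CRel Δ T R s t) (h : M14.step t x t') :
    ∃ s', M14.step s x s' ∧ CRel Δ T R s' t' := by
  obtain ⟨m, l₁, l₂, l₁', l₂', h1, h2, h3, h4, hBs, hBt⟩ := hC
  obtain ⟨l', hl, hBt'⟩ := BL_bwd hT hR hBt h
  have hl2 : LTr Δ T (m ++ l₂') x l' := (ltr_prefix_da h3).mp hl
  rcases ltr_split hl2 with ⟨m', hm, rfl⟩ | ⟨_, hcontra⟩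
  · have hrt : LTr Δ T (l₁ ++ (m ++ l₂)) x (m' ++ l₂) :=
      (ltr_prefix_da h1).mpr (ltr_append_right l₂ hm)
    obtain ⟨s', hs, hBs'⟩ := BL_fwd hT hR hBs hrt
    exact ⟨s', hs, m', [], l₂, [], l₂', by simp, h2, by simp, h4, hBs', hBt'⟩
  · exact absurd hcontra (dal_no_ltr h4)

theorem down_inj : ∀ (n m : ℕ), CRel Δ T R (St.down, rep n) (St.down, rep m) → n = m := by
  intro n
  induction n with
  | zero =>
    intro m hC
    cases m with
    | zero => rfl
    | succ k =>
      exfalso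
      obtain ⟨s', hs, _⟩ := crel_bwd hT hR hC (m14_down_b k)
      exact m14_down_nil hs
  | succ k ih =>
    intro m hC
    cases m with
    | zero =>
      exfalso
      obtain ⟨t', ht, _⟩ := crel_fwd hT hR hC (m14_down_b k)
      exact m14_down_nil ht
    | succ j =>
      obtain ⟨t', ht, hC'⟩ := crel_fwd hT hR hC (m14_down_b k)
      rw [m14_down_b_inv ht] at hC'
      exact congrArg Nat.succ (ih j hC')

theorem up_inj {n m : ℕ} (hC : CRel Δ T R (St.up, rep n) (St.up, rep m)) : n = m := by
  obtain ⟨t', ht, hC'⟩ := crel_fwd hT hR hC (m14_up_c n)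
  rw [m14_up_c_inv ht] at hC'
  exact down_inj hT hR n m hC'

theorem phi_inj {α : Expr Lab3 V} {n m : ℕ} (h1 : Phi Δ T R α n) (h2 : Phi Δ T R α m) :
    n = m := by
  obtain ⟨l₁, l₂, hd1, hd2, hB1⟩ := h1
  obtain ⟨l₁', l₂', hd3, hd4, hB2⟩ := h2
  exact up_inj hT hR ⟨[α], l₁, l₂, l₁', l₂', hd1, hd2, hd3, hd4, hB1, hB2⟩

end CRelFacts

end Main

end TwoStatePDAProof

/-- the process graph of this two-state pushdown automaton is not
bisimilar to the process graph of any guarded recursive specification over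
TSP⨟. -/
theorem two_state_pda_no_seq_spec (V : Type) [Finite V]
    (Δ : V → Expr Lab3 V) (hg : ∀ X, EGuarded (Δ X))
    (T : Expr Lab3 V → Lab3 → Expr Lab3 V → Prop) (hT : IsSeqStep Δ T) (X₀ : V) :
    ¬ Bisimilar2 ⟨T, EAcc Δ⟩ M14.lts (.var X₀) (St.up, []) := by
  rintro ⟨R, hR, hR0⟩
  open TwoStatePDAProof in
  have hspec : ∀ n : ℕ, ∃ α, α ∈ TwoStatePDAProof.SubSet Δ ∧ TwoStatePDAProof.Phi Δ T R α n := by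
    intro n
    obtain ⟨l, hB, hgood⟩ := TwoStatePDAProof.reach hT hR hg hR0 n
    exact TwoStatePDAProof.main_lemma hT hR hg hB hgood
  have hinj : Function.Injective (fun n => (hspec n).choose) := by
    intro n m hnm
    have h1 := (hspec n).choose_spec
    have h2 := (hspec m).choose_spec
    simp only at hnm
    rw [hnm] at h1
    exact TwoStatePDAProof.phi_inj hT hR h1.2 h2.2
  exact (TwoStatePDAProof.subSet_finite).not_infinite
    (Set.infinite_of_injective_forall_mem hinj fun n => (hspec n).choose_spec.1)
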